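/- arXiv:dg-ga/9603010 — 5 statements merged into one kernel-verified Lean document; each statement's English description precedes it below -/
import Mathlib

section
/- For every real number b, ∫₀^∞ r e^{−r²/2} cos(br) dr = 1 − b·e^{−b²/2} ∫₀^b e^{t²/2} dt. -/
/-!
Put `J b = ∫₀^∞ e^{-r²/2} sin (b r) dr`. Differentiating under the integral sign, `J' b` is the
cosine moment on the left-hand side, while integrating that moment by parts against
`d(-e^{-r²/2})` shows that it equals `1 - b J b`. So `J` solves `J' = 1 - b J` with `J 0 = 0`;
then `(e^{b²/2} J)' = e^{b²/2}`, whence `J b = e^{-b²/2} ∫₀^b e^{t²/2} dt`.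
-/

open MeasureTheory Real Set Filter Topology

lemma hasDerivAt_exp_neg_sq_div_two (r : ℝ) :
    HasDerivAt (fun r : ℝ => exp (-r ^ 2 / 2)) (-r * exp (-r ^ 2 / 2)) r := by
  have h : HasDerivAt (fun r : ℝ => -r ^ 2 / 2) (-r) r :=
    ((hasDerivAt_pow 2 r).neg.div_const 2).congr_deriv (by ring)
  simpa [mul_comm] using h.exp

lemma hasDerivAt_exp_sq_div_two (r : ℝ) :
    HasDerivAt (fun r : ℝ => exp (r ^ 2 / 2)) (r * exp (r ^ 2 / 2)) r := by
  have h : HasDerivAt (fun r : ℝ => r ^ 2 / 2) r r := by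
    simpa using (hasDerivAt_pow 2 r).div_const 2
  simpa [mul_comm] using h.exp

lemma integrable_exp_neg_sq_div_two : Integrable fun r : ℝ => exp (-r ^ 2 / 2) := by
  convert integrable_exp_neg_mul_sq (b := 1 / 2) (by norm_num) using 3
  ring

lemma integrable_mul_exp_neg_sq_div_two : Integrable fun r : ℝ => r * exp (-r ^ 2 / 2) := by
  convert integrable_mul_exp_neg_mul_sq (b := 1 / 2) (by norm_num) using 4
  ring

lemma tendsto_exp_neg_sq_div_two_atTop :
    Tendsto (fun r : ℝ => exp (-r ^ 2 / 2)) atTop (𝓝 0) :=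
  tendsto_exp_atBot.comp <| (tendsto_neg_atTop_atBot.comp
    (tendsto_pow_atTop two_ne_zero)).atBot_div_const two_pos

lemma integrable_exp_neg_sq_div_two_mul_sin (b : ℝ) :
    Integrable fun r : ℝ => exp (-r ^ 2 / 2) * sin (b * r) :=
  integrable_exp_neg_sq_div_two.mul_bdd (c := 1) (Continuous.aestronglyMeasurable (by fun_prop))
    (ae_of_all _ fun r => abs_sin_le_one _)

lemma integrable_mul_exp_neg_sq_div_two_mul_cos (b : ℝ) :
    Integrable fun r : ℝ => r * exp (-r ^ 2 / 2) * cos (b * r) :=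
  integrable_mul_exp_neg_sq_div_two.mul_bdd (c := 1) (Continuous.aestronglyMeasurable (by fun_prop))
    (ae_of_all _ fun r => abs_cos_le_one _)

noncomputable def gaussianSineTransform (b : ℝ) : ℝ :=
  ∫ r in Ioi (0 : ℝ), exp (-r ^ 2 / 2) * sin (b * r)

lemma integral_Ioi_mul_exp_neg_sq_div_two_mul_cos (b : ℝ) :
    ∫ r in Ioi (0 : ℝ), r * exp (-r ^ 2 / 2) * cos (b * r) = 1 - b * gaussianSineTransform b := by
  have hderiv (r : ℝ) : HasDerivAt (fun r => -(exp (-r ^ 2 / 2) * cos (b * r)))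
      (r * exp (-r ^ 2 / 2) * cos (b * r) + b * (exp (-r ^ 2 / 2) * sin (b * r))) r := by
    have hcos : HasDerivAt (fun r => cos (b * r)) (-sin (b * r) * b) r := by
      simpa using ((hasDerivAt_id r).const_mul b).cos
    exact ((hasDerivAt_exp_neg_sq_div_two r).mul hcos).neg.congr_deriv (by ring)
  have hlim : Tendsto (fun r => -(exp (-r ^ 2 / 2) * cos (b * r))) atTop (𝓝 0) :=
    squeeze_zero_norm (fun r => by
      rw [norm_neg, norm_mul, norm_of_nonneg (exp_pos _).le]
      exact mul_le_of_le_one_right (exp_pos _).le (abs_cos_le_one _))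
      tendsto_exp_neg_sq_div_two_atTop
  have hint := (integrable_mul_exp_neg_sq_div_two_mul_cos b).integrableOn (s := Ioi 0)
  have hint' := ((integrable_exp_neg_sq_div_two_mul_sin b).const_mul b).integrableOn (s := Ioi 0)
  have hparts := integral_Ioi_of_hasDerivAt_of_tendsto' (fun r _ => hderiv r) (hint.add hint') hlim
  rw [integral_add hint hint', integral_const_mul] at hparts
  simp only [zero_pow two_ne_zero, neg_zero, zero_div, exp_zero, mul_zero, cos_zero,
    mul_one, sub_neg_eq_add, zero_add] at hparts
  rw [gaussianSineTransform]
  linarith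

lemma hasDerivAt_gaussianSineTransform (b : ℝ) :
    HasDerivAt gaussianSineTransform
      (∫ r in Ioi (0 : ℝ), r * exp (-r ^ 2 / 2) * cos (b * r)) b := by
  have hbound (r x : ℝ) :
      ‖r * exp (-r ^ 2 / 2) * cos (x * r)‖ ≤ ‖r * exp (-r ^ 2 / 2)‖ := by
    rw [norm_mul _ (cos _)]
    exact mul_le_of_le_one_right (norm_nonneg _) (abs_cos_le_one _)
  have hderiv (r x : ℝ) : HasDerivAt (fun x => exp (-r ^ 2 / 2) * sin (x * r))
      (r * exp (-r ^ 2 / 2) * cos (x * r)) x :=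
    (((hasDerivAt_id x).mul_const r).sin.const_mul _).congr_deriv (by simp only [id, one_mul]; ring)
  exact (hasDerivAt_integral_of_dominated_loc_of_deriv_le (Metric.ball_mem_nhds b one_pos)
    (Eventually.of_forall fun x =>
      (integrable_exp_neg_sq_div_two_mul_sin x).integrableOn.aestronglyMeasurable)
    (integrable_exp_neg_sq_div_two_mul_sin b).integrableOn
    (integrable_mul_exp_neg_sq_div_two_mul_cos b).integrableOn.aestronglyMeasurable
    (ae_of_all _ fun r x _ => hbound r x) integrable_mul_exp_neg_sq_div_two.norm.integrableOn
    (ae_of_all _ fun r x _ => hderiv r x)).2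

lemma gaussianSineTransform_eq_exp_mul_integral (b : ℝ) :
    gaussianSineTransform b = exp (-b ^ 2 / 2) * ∫ t in (0 : ℝ)..b, exp (t ^ 2 / 2) := by
  have hderiv (x : ℝ) : HasDerivAt (fun x => exp (x ^ 2 / 2) * gaussianSineTransform x)
      (exp (x ^ 2 / 2)) x := by
    have hJ := hasDerivAt_gaussianSineTransform x
    rw [integral_Ioi_mul_exp_neg_sq_div_two_mul_cos] at hJ
    exact ((hasDerivAt_exp_sq_div_two x).mul hJ).congr_deriv (by ring)
  have hFTC := intervalIntegral.integral_eq_sub_of_hasDerivAt (fun x _ => hderiv x)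
    ((by fun_prop : Continuous fun t : ℝ => exp (t ^ 2 / 2)).intervalIntegrable 0 b)
  have h0 : gaussianSineTransform 0 = 0 := by simp [gaussianSineTransform]
  rw [h0, mul_zero, sub_zero] at hFTC
  rw [hFTC, ← mul_assoc, ← exp_add, show -b ^ 2 / 2 + b ^ 2 / 2 = 0 by ring, exp_zero, one_mul]

/-- For every real `b`, `∫₀^∞ r e^{−r²/2} cos(br) dr = 1 − b·e^{−b²/2} ∫₀^b e^{t²/2} dt`. -/
theorem stmt_2 (b : ℝ) :
    ∫ r in Set.Ioi (0 : ℝ), r * Real.exp (-r ^ 2 / 2) * Real.cos (b * r)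
      = 1 - b * Real.exp (-b ^ 2 / 2) * ∫ t in (0 : ℝ)..b, Real.exp (t ^ 2 / 2) := by
  rw [integral_Ioi_mul_exp_neg_sq_div_two_mul_cos, gaussianSineTransform_eq_exp_mul_integral, mul_assoc]
end

section
/- For every real number b with |b| ≤ 1, ∫₀^∞ r e^{−r²/2} cos(br) dr ≥ 1/4. -/
/-!
The cosine dominates its Taylor polynomial of degree six on all of `ℝ`, and the Gaussian moments
`∫₀^∞ r^(2k+1) e^(-r²/2) dr = 2^k k!` integrate that polynomial against `r e^(-r²/2)` to
`1 - b² + b⁴/3 - b⁶/15`, which decreases in `b²` and is `4/15 > 1/4` at `b² = 1`.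
-/

open MeasureTheory Real Set

lemma nonneg_of_deriv_nonneg {f : ℝ → ℝ} (hf : Differentiable ℝ f) (h0 : f 0 = 0)
    (hf' : ∀ x, 0 ≤ x → 0 ≤ deriv f x) {x : ℝ} (hx : 0 ≤ x) : 0 ≤ f x := by
  have hmono : MonotoneOn f (Ici 0) :=
    monotoneOn_of_deriv_nonneg (convex_Ici 0) hf.continuous.continuousOn hf.differentiableOn
      fun y hy => hf' y (by simp_all [le_of_lt])
  simpa [h0] using hmono self_mem_Ici hx hx

namespace Real

lemma cos_le_quartic {x : ℝ} (hx : 0 ≤ x) : cos x ≤ 1 - x ^ 2 / 2 + x ^ 4 / 24 := by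
  have := nonneg_of_deriv_nonneg (f := fun t => 1 - t ^ 2 / 2 + t ^ 4 / 24 - cos t) (by fun_prop)
    (by simp) (fun t ht => by
      simp (disch := fun_prop)
      linarith [sin_ge_sub_cube ht]) hx
  linarith

lemma sin_le_quintic {x : ℝ} (hx : 0 ≤ x) : sin x ≤ x - x ^ 3 / 6 + x ^ 5 / 120 := by
  have := nonneg_of_deriv_nonneg (f := fun t => t - t ^ 3 / 6 + t ^ 5 / 120 - sin t) (by fun_prop)
    (by simp) (fun t ht => by
      simp (disch := fun_prop)
      linarith [cos_le_quartic ht]) hx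
  linarith

lemma sextic_le_cos (x : ℝ) : 1 - x ^ 2 / 2 + x ^ 4 / 24 - x ^ 6 / 720 ≤ cos x := by
  wlog hx : 0 ≤ x
  · simpa [Even.neg_pow, even_two, show Even 4 by decide, show Even 6 by decide]
      using this (-x) (by linarith)
  have := nonneg_of_deriv_nonneg (f := fun t => cos t - (1 - t ^ 2 / 2 + t ^ 4 / 24 - t ^ 6 / 720))
    (by fun_prop) (by simp) (fun t ht => by
      simp (disch := fun_prop)
      linarith [sin_le_quintic ht]) hx
  linarith

end Real

lemma integrableOn_pow_mul_exp_neg_sq_div_two (n : ℕ) :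
    IntegrableOn (fun r : ℝ => r ^ n * exp (-r ^ 2 / 2)) (Ioi 0) := by
  refine (integrableOn_rpow_mul_exp_neg_mul_sq (b := 1 / 2) (by norm_num) (s := n)
    (by linarith [n.cast_nonneg (α := ℝ)])).congr_fun (fun r _ => ?_) measurableSet_Ioi
  simp only [rpow_natCast]
  ring_nf

lemma integral_pow_mul_exp_neg_sq_div_two (k : ℕ) :
    ∫ r in Ioi (0 : ℝ), r ^ (2 * k + 1) * exp (-r ^ 2 / 2) = 2 ^ k * k.factorial := by
  have h := integral_rpow_mul_exp_neg_mul_rpow (p := 2) (q := 2 * k + 1) (b := 1 / 2)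
    (by norm_num) (by linarith [k.cast_nonneg (α := ℝ)]) (by norm_num)
  have hexp : -(2 * (k : ℝ) + 1 + 1) / 2 = -(k + 1 : ℕ) := by push_cast; ring
  have harg : (2 * (k : ℝ) + 1 + 1) / 2 = k + 1 := by ring
  rw [hexp, rpow_neg (by norm_num), rpow_natCast, harg, Gamma_nat_eq_factorial] at h
  calc ∫ r in Ioi (0 : ℝ), r ^ (2 * k + 1) * exp (-r ^ 2 / 2)
      = ∫ r in Ioi (0 : ℝ), r ^ (2 * (k : ℝ) + 1) * exp (-(1 / 2) * r ^ (2 : ℝ)) := by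
        refine setIntegral_congr_fun measurableSet_Ioi fun r _ => ?_
        norm_cast
        ring_nf
    _ = 2 ^ k * k.factorial := by
        rw [h, one_div, inv_pow, inv_inv, pow_succ]
        ring

section CosTaylor

open Finset

variable (n : ℕ) (b : ℝ)

lemma mul_exp_neg_sq_div_two_mul_cos_taylor (r : ℝ) :
    r * exp (-r ^ 2 / 2) * ∑ k ∈ range n, (-1) ^ k * (b * r) ^ (2 * k) / (2 * k).factorial =
      ∑ k ∈ range n, (-1) ^ k * b ^ (2 * k) / (2 * k).factorial *
        (r ^ (2 * k + 1) * exp (-r ^ 2 / 2)) := by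
  rw [mul_sum]
  refine sum_congr rfl fun k _ => ?_
  ring

lemma integrableOn_mul_exp_neg_sq_div_two_mul_cos_taylor :
    IntegrableOn (fun r : ℝ => r * exp (-r ^ 2 / 2) *
      ∑ k ∈ range n, (-1) ^ k * (b * r) ^ (2 * k) / (2 * k).factorial) (Ioi 0) := by
  simp_rw [mul_exp_neg_sq_div_two_mul_cos_taylor]
  exact integrable_finsetSum _ fun k _ => (integrableOn_pow_mul_exp_neg_sq_div_two _).const_mul _

lemma integral_mul_exp_neg_sq_div_two_mul_cos_taylor :
    ∫ r in Ioi (0 : ℝ), r * exp (-r ^ 2 / 2) *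
        ∑ k ∈ range n, (-1) ^ k * (b * r) ^ (2 * k) / (2 * k).factorial =
      ∑ k ∈ range n, (-1) ^ k * b ^ (2 * k) * 2 ^ k * k.factorial / (2 * k).factorial := by
  simp_rw [mul_exp_neg_sq_div_two_mul_cos_taylor]
  rw [integral_finsetSum _ fun k _ => (integrableOn_pow_mul_exp_neg_sq_div_two _).const_mul _]
  refine sum_congr rfl fun k _ => ?_
  rw [integral_const_mul, integral_pow_mul_exp_neg_sq_div_two]
  ring

end CosTaylor

lemma integrableOn_mul_exp_neg_sq_div_two_mul_cos (b : ℝ) :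
    IntegrableOn (fun r : ℝ => r * exp (-r ^ 2 / 2) * cos (b * r)) (Ioi 0) := by
  refine Integrable.mono' (integrableOn_pow_mul_exp_neg_sq_div_two 1)
    (Continuous.aestronglyMeasurable (by fun_prop)) ?_
  filter_upwards [ae_restrict_mem measurableSet_Ioi] with r hr
  have hweight : 0 ≤ r * exp (-r ^ 2 / 2) := mul_nonneg (le_of_lt hr) (exp_pos _).le
  rw [norm_mul, pow_one, norm_of_nonneg hweight]
  exact mul_le_of_le_one_right hweight (abs_cos_le_one _)

/-- For every real `b` with `|b| ≤ 1`, `∫₀^∞ r e^{−r²/2} cos(br) dr ≥ 1/4`. -/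
theorem stmt_3 (b : ℝ) (hb : |b| ≤ 1) :
    (1 : ℝ) / 4 ≤ ∫ r in Set.Ioi (0 : ℝ), r * Real.exp (-r ^ 2 / 2) * Real.cos (b * r) := by
  have hb2 : b ^ 2 ≤ 1 := (sq_le_one_iff_abs_le_one b).2 hb
  have htaylor (r : ℝ) :
      ∑ k ∈ Finset.range 4, (-1) ^ k * (b * r) ^ (2 * k) / (2 * k).factorial ≤ cos (b * r) := by
    norm_num [Finset.sum_range_succ, Nat.factorial]
    linarith [sextic_le_cos (b * r)]
  have hmono := setIntegral_mono_on (integrableOn_mul_exp_neg_sq_div_two_mul_cos_taylor 4 b)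
    (integrableOn_mul_exp_neg_sq_div_two_mul_cos b) measurableSet_Ioi
    fun r (hr : 0 < r) => mul_le_mul_of_nonneg_left (htaylor r) (by positivity)
  rw [integral_mul_exp_neg_sq_div_two_mul_cos_taylor] at hmono
  norm_num [Finset.sum_range_succ, Nat.factorial] at hmono
  nlinarith [mul_nonneg (sq_nonneg b) (sub_nonneg.2 hb2),
    mul_nonneg (pow_two_nonneg (b ^ 2)) (sub_nonneg.2 hb2)]
end

section
/- Let σ be a nonzero real number and λ > 1 a real number. Then f_σ(λ) = ∫₀^{2π} [1 − cos(σ·log(λ cos²θ + λ^{−1} sin²θ))] dθ is strictly positive. -/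
/-! The integrand is continuous and nonnegative, so it suffices to find one point where it is
positive. The phase `σ log (l cos²θ + l⁻¹ sin²θ)` runs from `σ log l` at `θ = 0` to `-σ log l` at
`θ = π / 2`, so by the intermediate value theorem it takes the value `min |σ log l| π`, which is
nonzero and at most `π` in modulus; there the cosine is strictly less than `1`. -/

open Real Set

lemma mul_cos_sq_add_mul_sin_sq_pos {a b : ℝ} (ha : 0 < a) (hb : 0 < b) (θ : ℝ) :
    0 < a * cos θ ^ 2 + b * sin θ ^ 2 := by
  rcases eq_or_ne (cos θ) 0 with h | h
  · have hsin : sin θ ^ 2 = 1 := by simpa [h] using sin_sq_add_cos_sq θ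
    simpa [h, hsin] using hb
  · positivity

lemma continuous_mul_log_mul_cos_sq_add_inv_mul_sin_sq {l : ℝ} (hl : 0 < l) (σ : ℝ) :
    Continuous fun θ => σ * log (l * cos θ ^ 2 + l⁻¹ * sin θ ^ 2) := by
  fun_prop (disch := exact fun θ => (mul_cos_sq_add_mul_sin_sq_pos hl (inv_pos.2 hl) θ).ne')

lemma cos_lt_one_of_ne_zero_of_abs_le_pi {t : ℝ} (ht : t ≠ 0) (htπ : |t| ≤ π) : cos t < 1 := by
  have h2π : |t| < 2 * π := htπ.trans_lt (by linarith [pi_pos])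
  refine (cos_le_one t).lt_of_ne fun h => ht ?_
  exact (cos_eq_one_iff_of_lt_of_lt (neg_lt_of_abs_lt h2π) (lt_of_abs_lt h2π)).1 h

lemma mem_uIcc_self_neg_of_abs_le {t x : ℝ} (h : |t| ≤ |x|) : t ∈ uIcc x (-x) := by
  obtain ⟨h₁, h₂⟩ := abs_le.1 h
  rw [mem_uIcc]
  rcases le_total 0 x with hx | hx
  · rw [abs_of_nonneg hx] at h₁ h₂
    exact Or.inr ⟨h₁, h₂⟩
  · simp only [abs_of_nonpos hx, neg_neg] at h₁ h₂
    exact Or.inl ⟨h₁, h₂⟩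

lemma exists_cos_mul_log_lt_one {σ l : ℝ} (hσ : σ ≠ 0) (hl : 1 < l) :
    ∃ θ ∈ Icc 0 (π / 2), cos (σ * log (l * cos θ ^ 2 + l⁻¹ * sin θ ^ 2)) < 1 := by
  have hx : σ * log l ≠ 0 := mul_ne_zero hσ (log_pos hl).ne'
  set t := min |σ * log l| π
  have ht : 0 < t := lt_min (abs_pos.2 hx) pi_pos
  have htπ : |t| ≤ π := (abs_of_pos ht).trans_le (min_le_right _ _)
  have hmem : t ∈ uIcc (σ * log l) (-(σ * log l)) :=
    mem_uIcc_self_neg_of_abs_le ((abs_of_pos ht).trans_le (min_le_left _ _))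
  obtain ⟨θ, hθ, hφθ⟩ := intermediate_value_uIcc
    (continuous_mul_log_mul_cos_sq_add_inv_mul_sin_sq (one_pos.trans hl) σ).continuousOn
    (a := 0) (b := π / 2) (by simpa [log_inv] using hmem)
  refine ⟨θ, by rwa [uIcc_of_le (by positivity)] at hθ, ?_⟩
  rw [show σ * log (l * cos θ ^ 2 + l⁻¹ * sin θ ^ 2) = t from hφθ]
  exact cos_lt_one_of_ne_zero_of_abs_le_pi ht.ne' htπ

/-- For nonzero real `σ` and real `l > 1`,
`f_σ(l) = ∫₀^{2π} [1 − cos(σ·log(l cos²θ + l⁻¹ sin²θ))] dθ` is strictly positive. -/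
theorem stmt_4 (σ : ℝ) (hσ : σ ≠ 0) (l : ℝ) (hl : 1 < l) :
    0 < ∫ θ in (0 : ℝ)..(2 * π),
      (1 - Real.cos (σ * Real.log (l * Real.cos θ ^ 2 + l⁻¹ * Real.sin θ ^ 2))) := by
  obtain ⟨θ₀, hθ₀, hcos⟩ := exists_cos_mul_log_lt_one hσ hl
  have hcont := continuous_mul_log_mul_cos_sq_add_inv_mul_sin_sq (one_pos.trans hl) σ
  refine intervalIntegral.integral_pos two_pi_pos
    (continuous_const.sub (continuous_cos.comp hcont)).continuousOn
    (fun θ _ => sub_nonneg.2 (cos_le_one _)) ⟨θ₀, ?_, sub_pos.2 hcos⟩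
  exact Icc_subset_Icc le_rfl (by linarith [pi_pos]) hθ₀
end

section
/- Let σ be a real number. Then lim_{δ→0⁺} f_σ(1+δ)/δ² = πσ²/2, where f_σ(λ) = ∫₀^{2π} [1 − cos(σ log(λ cos²θ + λ^{−1} sin²θ))] dθ. -/
open Real Filter Topology

/-!
Write `1 - cos x = 2 sin² (x / 2)`. Since `log ((1 + δ) cos² θ + (1 + δ)⁻¹ sin² θ)` vanishes at
`δ = 0` with derivative `cos 2θ`, the integrand divided by `δ²` tends to `σ² cos² 2θ / 2`, whose
integral over a period is `π σ² / 2`. The argument of the logarithm lies between `(1 + δ)⁻¹` and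
`1 + δ`, so `1 - cos x ≤ x² / 2` bounds the quotient by `σ² / 2` and dominated convergence applies.
-/

theorem one_sub_cos_eq_two_mul_sin_half_sq (x : ℝ) : 1 - cos x = 2 * sin (x / 2) ^ 2 := by
  have := cos_two_mul' (x / 2)
  rw [mul_div_cancel₀ x two_ne_zero, cos_sq'] at this
  linarith

theorem tendsto_one_sub_cos_comp_div_sq {φ : ℝ → ℝ} {d : ℝ} (hφ : HasDerivAt φ d 0)
    (hφ0 : φ 0 = 0) :
    Tendsto (fun t => (1 - cos (φ t)) / t ^ 2) (𝓝[≠] 0) (𝓝 (d ^ 2 / 2)) := by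
  have hsin : HasDerivAt (fun t => sin (φ t / 2)) (d / 2) 0 := by
    simpa [hφ0] using (hφ.div_const 2).sin
  have hslope : Tendsto (fun t => sin (φ t / 2) / t) (𝓝[≠] 0) (𝓝 (d / 2)) := by
    simpa [hφ0, div_eq_inv_mul] using hsin.tendsto_slope_zero
  convert (hslope.pow 2).const_mul 2 using 2 with t
  · rw [one_sub_cos_eq_two_mul_sin_half_sq, div_pow, mul_div_assoc]
  · ring

theorem log_mul_cos_sq_add_inv_mul_sin_sq_mem_Icc {l : ℝ} (hl : 1 ≤ l) (θ : ℝ) :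
    log (l * cos θ ^ 2 + l⁻¹ * sin θ ^ 2) ∈ Set.Icc (-log l) (log l) := by
  have hl0 : 0 < l := by linarith
  have hinv : l⁻¹ ≤ l := (inv_le_one_of_one_le₀ hl).trans hl
  have hsum := sin_sq_add_cos_sq θ
  have hlower : l⁻¹ ≤ l * cos θ ^ 2 + l⁻¹ * sin θ ^ 2 := by
    nlinarith [sq_nonneg (cos θ)]
  have hupper : l * cos θ ^ 2 + l⁻¹ * sin θ ^ 2 ≤ l := by
    nlinarith [sq_nonneg (sin θ)]
  constructor
  · rw [← log_inv]
    exact log_le_log (inv_pos.2 hl0) hlower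
  · exact log_le_log ((inv_pos.2 hl0).trans_le hlower) hupper

theorem hasDerivAt_log_mul_cos_sq_add_inv_mul_sin_sq (θ : ℝ) :
    HasDerivAt (fun δ => log ((1 + δ) * cos θ ^ 2 + (1 + δ)⁻¹ * sin θ ^ 2)) (cos (2 * θ)) 0 := by
  have hshift : HasDerivAt (fun δ : ℝ => 1 + δ) 1 0 := (hasDerivAt_id 0).const_add 1
  have hA : HasDerivAt (fun δ => (1 + δ) * cos θ ^ 2 + (1 + δ)⁻¹ * sin θ ^ 2)
      (cos (2 * θ)) 0 := by
    refine ((hshift.mul_const (cos θ ^ 2)).add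
      ((hshift.inv (by norm_num)).mul_const (sin θ ^ 2))).congr_deriv ?_
    rw [cos_two_mul']
    ring
  have hA0 : (1 + 0 : ℝ) * cos θ ^ 2 + (1 + 0 : ℝ)⁻¹ * sin θ ^ 2 = 1 := by
    simp [add_comm]
  simpa [hA0] using hA.log (by rw [hA0]; exact one_ne_zero)

theorem integral_cos_two_mul_sq : ∫ θ in (0 : ℝ)..2 * π, cos (2 * θ) ^ 2 = π := by
  rw [intervalIntegral.integral_comp_mul_left (fun x => cos x ^ 2) two_ne_zero, integral_cos_sq]
  have : sin (2 * (2 * π)) = 0 := by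
    rw [← mul_assoc]; exact_mod_cast sin_nat_mul_pi 4
  simp [this]

theorem abs_one_sub_cos_mul_log_le {l : ℝ} (hl : 1 ≤ l) (σ θ : ℝ) :
    |1 - cos (σ * log (l * cos θ ^ 2 + l⁻¹ * sin θ ^ 2))| ≤ σ ^ 2 * (l - 1) ^ 2 / 2 := by
  set x := log (l * cos θ ^ 2 + l⁻¹ * sin θ ^ 2)
  have hx : |x| ≤ log l := abs_le.2 (log_mul_cos_sq_add_inv_mul_sin_sq_mem_Icc hl θ)
  have hlog : log l ≤ l - 1 := log_le_sub_one_of_pos (by linarith)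
  have hx' : x ^ 2 ≤ (l - 1) ^ 2 := by
    rw [← sq_abs]
    exact pow_le_pow_left₀ (abs_nonneg x) (hx.trans hlog) 2
  rw [abs_of_nonneg (sub_nonneg.2 (cos_le_one _))]
  calc 1 - cos (σ * x) ≤ (σ * x) ^ 2 / 2 := by linarith [one_sub_sq_div_two_le_cos (x := σ * x)]
    _ ≤ σ ^ 2 * (l - 1) ^ 2 / 2 := by rw [mul_pow]; gcongr

/-- With `f_σ(l) = ∫₀^{2π} [1 − cos(σ log(l cos²θ + l⁻¹ sin²θ))] dθ`,
for every real `σ`, `lim_{δ→0⁺} f_σ(1+δ)/δ² = πσ²/2`. -/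
theorem stmt_5 (σ : ℝ) :
    Tendsto
      (fun δ : ℝ =>
        (∫ θ in (0 : ℝ)..(2 * π),
          (1 - Real.cos (σ * Real.log ((1 + δ) * Real.cos θ ^ 2 + (1 + δ)⁻¹ * Real.sin θ ^ 2))))
        / δ ^ 2)
      (nhdsWithin 0 (Set.Ioi 0)) (nhds (π * σ ^ 2 / 2)) := by
  have hlimit : ∫ θ in (0 : ℝ)..2 * π, (σ * cos (2 * θ)) ^ 2 / 2 = π * σ ^ 2 / 2 := by
    simp_rw [mul_pow, mul_div_assoc, intervalIntegral.integral_const_mul,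
      intervalIntegral.integral_div, integral_cos_two_mul_sq]
    ring
  rw [← hlimit]
  simp_rw [← intervalIntegral.integral_div]
  refine intervalIntegral.tendsto_integral_filter_of_dominated_convergence (fun _ => σ ^ 2 / 2)
    (Eventually.of_forall fun δ => (by fun_prop : Measurable _).aestronglyMeasurable) ?_
    intervalIntegrable_const
    (MeasureTheory.ae_of_all _ fun θ _ => ?_)
  · filter_upwards [self_mem_nhdsWithin] with δ (hδ : 0 < δ)
    refine MeasureTheory.ae_of_all _ fun θ _ => ?_
    have hδ2 : 0 < δ ^ 2 := by positivity
    rw [Real.norm_eq_abs, abs_div, abs_of_pos hδ2, div_le_iff₀ hδ2]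
    simpa [mul_div_right_comm] using abs_one_sub_cos_mul_log_le (by linarith : 1 ≤ 1 + δ) σ θ
  · refine (tendsto_one_sub_cos_comp_div_sq
      ((hasDerivAt_log_mul_cos_sq_add_inv_mul_sin_sq θ).const_mul σ) (by simp)).mono_left ?_
    exact nhdsWithin_mono _ fun δ (hδ : 0 < δ) => hδ.ne'
end

section
/- Let Ω₁, Ω₂ ⊆ ℂ be open sets and s ∈ ℂ. Let ψ: ℂ → ℂ be real-differentiable on Ω₁ with ψ(Ω₁) ⊆ Ω₂ and with Jacobian determinant J(x) = det(Dψ(x)) > 0 for all x ∈ Ω₁. Let γ₁ be holomorphic on Ω₁ with γ₁(Ω₁) ⊆ Ω₁ and γ₁'(x) ≠ 0 on Ω₁, and let γ₂ be holomorphic on Ω₂ with γ₂(Ω₂) ⊆ Ω₂ and γ₂'(w) ≠ 0 on Ω₂, such that ψ∘γ₁ = γ₂∘ψ on Ω₁. If f: Ω₂ → ℂ satisfies f(γ₂(w))·|γ₂'(w)|^s = f(w) for all w ∈ Ω₂, then the function g(x) = (J(x))^{s/2}·f(ψ(x)) satisfies g(γ₁(x))·|γ₁'(x)|^s = g(x)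 for all x ∈ Ω₁. -/
open Set Filter Topology

/- The chain rule applied to `ψ ∘ γ₁ = γ₂ ∘ ψ` and the multiplicativity of the determinant give
`J(γ₁ x) · det Dγ₁(x) = det Dγ₂(ψ x) · J(x)`. A holomorphic map has real Jacobian `|γ'|²`, so
`J(γ₁ x) |γ₁'(x)|² = J(x) |γ₂'(ψ x)|²`; raising this to the power `s/2` is exactly the
cancellation of the weight factors in `g(γ₁ x) |γ₁'(x)|^s = g(x)`. -/

theorem DifferentiableAt.det_fderiv_real {f : ℂ → ℂ} {x : ℂ} (hf : DifferentiableAt ℂ f x) :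
    (fderiv ℝ f x).det = ‖deriv f x‖ ^ 2 := by
  rw [ContinuousLinearMap.det, hf.fderiv_restrictScalars ℝ,
    ContinuousLinearMap.coe_restrictScalars, LinearMap.det_restrictScalars,
    hf.hasDerivAt.hasFDerivAt.fderiv, ← ContinuousLinearMap.det,
    ContinuousLinearMap.det_toSpanSingleton, Algebra.norm_complex_apply,
    Complex.normSq_eq_norm_sq]

theorem det_fderiv_mul_det_fderiv_of_semiconj {𝕜 E : Type*} [NontriviallyNormedField 𝕜]
    [NormedAddCommGroup E] [NormedSpace 𝕜 E] {ψ γ₁ γ₂ : E → E} {x : E}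
    (hψ : DifferentiableAt 𝕜 ψ x) (hψγ₁ : DifferentiableAt 𝕜 ψ (γ₁ x))
    (hγ₁ : DifferentiableAt 𝕜 γ₁ x) (hγ₂ : DifferentiableAt 𝕜 γ₂ (ψ x))
    (hconj : ψ ∘ γ₁ =ᶠ[𝓝 x] γ₂ ∘ ψ) :
    (fderiv 𝕜 ψ (γ₁ x)).det * (fderiv 𝕜 γ₁ x).det =
      (fderiv 𝕜 γ₂ (ψ x)).det * (fderiv 𝕜 ψ x).det := by
  have hchain := hconj.fderiv_eq (𝕜 := 𝕜)
  rw [fderiv_comp x hψγ₁ hγ₁, fderiv_comp x hγ₂ hψ] at hchain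
  simp only [ContinuousLinearMap.det, ← LinearMap.det_comp]
  exact congrArg ContinuousLinearMap.det hchain

theorem Complex.exp_half_log_mul_sq (s : ℂ) {a b : ℝ} (ha : 0 < a) (hb : 0 < b) :
    exp (s / 2 * Real.log (a * b ^ 2)) = exp (s / 2 * Real.log a) * exp (s * Real.log b) := by
  rw [← exp_add, Real.log_mul ha.ne' (by positivity), Real.log_pow]
  push_cast
  ring_nf

theorem stmt_8_general (Ω₁ Ω₂ : Set ℂ) (hΩ₁ : IsOpen Ω₁) (s : ℂ)
    (ψ : ℂ → ℂ) (hψdiff : ∀ x ∈ Ω₁, DifferentiableAt ℝ ψ x)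
    (hψmaps : MapsTo ψ Ω₁ Ω₂)
    (J : ℂ → ℝ) (hJ : ∀ x ∈ Ω₁, J x = LinearMap.det ((fderiv ℝ ψ x : ℂ →L[ℝ] ℂ) : ℂ →ₗ[ℝ] ℂ))
    (hJpos : ∀ x ∈ Ω₁, 0 < J x)
    (γ₁ : ℂ → ℂ) (hγ₁ : ∀ x ∈ Ω₁, DifferentiableAt ℂ γ₁ x)
    (hγ₁maps : MapsTo γ₁ Ω₁ Ω₁) (hγ₁' : ∀ x ∈ Ω₁, deriv γ₁ x ≠ 0)
    (γ₂ : ℂ → ℂ) (hγ₂ : ∀ w ∈ Ω₂, DifferentiableAt ℂ γ₂ w)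
    (hγ₂' : ∀ w ∈ Ω₂, deriv γ₂ w ≠ 0)
    (hconj : ∀ x ∈ Ω₁, ψ (γ₁ x) = γ₂ (ψ x))
    (f : ℂ → ℂ)
    (hf : ∀ w ∈ Ω₂, f (γ₂ w) * Complex.exp (s * Real.log ‖deriv γ₂ w‖) = f w)
    (g : ℂ → ℂ)
    (hg : ∀ x ∈ Ω₁, g x = Complex.exp ((s / 2) * Real.log (J x)) * f (ψ x)) :
    ∀ x ∈ Ω₁, g (γ₁ x) * Complex.exp (s * Real.log ‖deriv γ₁ x‖) = g x := by
  intro x hx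
  have hx₁ : γ₁ x ∈ Ω₁ := hγ₁maps hx
  have hw : ψ x ∈ Ω₂ := hψmaps hx
  have hjac : J (γ₁ x) * ‖deriv γ₁ x‖ ^ 2 = ‖deriv γ₂ (ψ x)‖ ^ 2 * J x := by
    rw [hJ _ hx₁, hJ _ hx, ← (hγ₁ x hx).det_fderiv_real, ← (hγ₂ _ hw).det_fderiv_real]
    exact det_fderiv_mul_det_fderiv_of_semiconj (hψdiff x hx) (hψdiff _ hx₁)
      ((hγ₁ x hx).restrictScalars ℝ) ((hγ₂ _ hw).restrictScalars ℝ)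
      (eventually_of_mem (hΩ₁.mem_nhds hx) hconj)
  calc g (γ₁ x) * Complex.exp (s * Real.log ‖deriv γ₁ x‖)
      = Complex.exp (s / 2 * Real.log (J (γ₁ x) * ‖deriv γ₁ x‖ ^ 2)) * f (γ₂ (ψ x)) := by
        rw [hg _ hx₁, hconj x hx, Complex.exp_half_log_mul_sq s (hJpos _ hx₁)
          (norm_pos_iff.2 (hγ₁' x hx))]
        ring
    _ = Complex.exp (s / 2 * Real.log (J x * ‖deriv γ₂ (ψ x)‖ ^ 2)) * f (γ₂ (ψ x)) := by
        rw [hjac, mul_comm (‖_‖ ^ 2)]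
    _ = g x := by
        rw [Complex.exp_half_log_mul_sq s (hJpos x hx) (norm_pos_iff.2 (hγ₂' _ hw)), hg x hx,
          ← hf _ hw]
        ring

/-- Pullback of automorphic forms: if `ψ` is a real-differentiable map with positive
Jacobian determinant `J` on `Ω₁` conjugating the holomorphic map `γ₁` on `Ω₁` to the
holomorphic map `γ₂` on `Ω₂`, and `f` has weight `s` with respect to `γ₂`, then
`g(x) = J(x)^{s/2}·f(ψ(x))` has weight `s` with respect to `γ₁`.  Here the complex
power `t^w` of a positive real `t` is `exp(w·log t)`. -/
theorem stmt_8 (Ω₁ Ω₂ : Set ℂ) (hΩ₁ : IsOpen Ω₁) (hΩ₂ : IsOpen Ω₂) (s : ℂ)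
    (ψ : ℂ → ℂ) (hψdiff : ∀ x ∈ Ω₁, DifferentiableAt ℝ ψ x)
    (hψmaps : MapsTo ψ Ω₁ Ω₂)
    (J : ℂ → ℝ) (hJ : ∀ x ∈ Ω₁, J x = LinearMap.det ((fderiv ℝ ψ x : ℂ →L[ℝ] ℂ) : ℂ →ₗ[ℝ] ℂ))
    (hJpos : ∀ x ∈ Ω₁, 0 < J x)
    (γ₁ : ℂ → ℂ) (hγ₁ : ∀ x ∈ Ω₁, DifferentiableAt ℂ γ₁ x)
    (hγ₁maps : MapsTo γ₁ Ω₁ Ω₁) (hγ₁' : ∀ x ∈ Ω₁, deriv γ₁ x ≠ 0)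
    (γ₂ : ℂ → ℂ) (hγ₂ : ∀ w ∈ Ω₂, DifferentiableAt ℂ γ₂ w)
    (hγ₂maps : MapsTo γ₂ Ω₂ Ω₂) (hγ₂' : ∀ w ∈ Ω₂, deriv γ₂ w ≠ 0)
    (hconj : ∀ x ∈ Ω₁, ψ (γ₁ x) = γ₂ (ψ x))
    (f : ℂ → ℂ)
    (hf : ∀ w ∈ Ω₂, f (γ₂ w) * Complex.exp (s * Real.log ‖deriv γ₂ w‖) = f w)
    (g : ℂ → ℂ)
    (hg : ∀ x ∈ Ω₁, g x = Complex.exp ((s / 2) * Real.log (J x)) * f (ψ x)) :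
    ∀ x ∈ Ω₁, g (γ₁ x) * Complex.exp (s * Real.log ‖deriv γ₁ x‖) = g x :=
  stmt_8_general Ω₁ Ω₂ hΩ₁ s ψ hψdiff hψmaps J hJ hJpos γ₁ hγ₁ hγ₁maps hγ₁' γ₂ hγ₂ hγ₂' hconj f hf g
    hg
end
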